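/- arXiv:1510.05433 — 2 statements merged into one kernel-verified Lean document; each statement's English description precedes it below -/
import Mathlib

section
/- Suppose p - 1 separators split a sorted sequence I into p parts with consecutive separators at distance at most |I|/p, and another p - 1 separators split a sorted sequence T into p parts with consecutive separators at distance at most |T|/p. Then refining both sequences by the union of all 2(p-1) separators produces at most 2p - 1 parts of I each of size at most |I|/p, and at most 2p - 1 parts of T each of size at most |T|/p. -/
open Finset

variable {α : Type*} [LinearOrder α] [DecidableEq α]

/-- The part of `I` belonging to separator `x` w.r.t. a separator set `X`:
elements `≤ x` that are greater than every separator of `X` below `x`. -/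
def sepPart (I X : Finset α) (x : α) : Finset α :=
  I.filter (fun e => e ≤ x ∧ ∀ y ∈ X, y < x → y < e)

/-- The part of `I` above all separators of `X`. -/
def topPart (I X : Finset α) : Finset α :=
  I.filter (fun e => ∀ y ∈ X, y < e)

/-
Refining a separator set only shrinks parts: a part of the refinement by `X' ⊇ X` lies inside
the part of `X` belonging to the least separator of `X` above it, or inside the top part of `X`
when there is none. Applied to `X = S` and `X = Tsep` inside `X' = S ∪ Tsep`, the size bounds
carry over, while `S ∪ Tsep` has at most `2(p - 1)` separators.
-/

section Refinement

omit [DecidableEq α]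

variable {X X' : Finset α} (I : Finset α)

theorem topPart_anti (hX : X ⊆ X') : topPart I X' ⊆ topPart I X :=
  monotone_filter_right I fun _ _ h y hy => h y (hX hy)

theorem sepPart_subset_sepPart (hX : X ⊆ X') {x s : α} (hxs : x ≤ s)
    (hgap : ∀ y ∈ X, y < s → y < x) : sepPart I X' x ⊆ sepPart I X s :=
  monotone_filter_right I fun _ _ ⟨hex, hbelow⟩ =>
    ⟨hex.trans hxs, fun y hy hys => hbelow y (hX hy) (hgap y hy hys)⟩

theorem sepPart_subset_topPart (hX : X ⊆ X') {x : α} (hx : ∀ y ∈ X, y < x) :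
    sepPart I X' x ⊆ topPart I X :=
  monotone_filter_right I fun _ _ ⟨_, hbelow⟩ y hy => hbelow y (hX hy) (hx y hy)

theorem sepPart_subset_sepPart_or_topPart (hX : X ⊆ X') (x : α) :
    (∃ s ∈ X, sepPart I X' x ⊆ sepPart I X s) ∨ sepPart I X' x ⊆ topPart I X := by
  obtain ⟨s, hs, hxs, hmin⟩ | hx :
      (∃ s ∈ X, x ≤ s ∧ ∀ y ∈ X, x ≤ y → s ≤ y) ∨ ∀ y ∈ X, y < x := by
    by_cases hne : (X.filter (x ≤ ·)).Nonempty
    · obtain ⟨s, hs, hmin⟩ := (X.filter (x ≤ ·)).exists_min_image id hne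
      rw [mem_filter] at hs
      exact .inl ⟨s, hs.1, hs.2, fun y hy hxy => hmin y (mem_filter.2 ⟨hy, hxy⟩)⟩
    · simp only [not_nonempty_iff_eq_empty, filter_eq_empty_iff, not_le] at hne
      exact .inr hne
  · exact .inl ⟨s, hs, sepPart_subset_sepPart I hX hxs fun y hy hys =>
      lt_of_not_ge fun hxy => (hmin y hy hxy).not_gt hys⟩
  · exact .inr (sepPart_subset_topPart I hX hx)

theorem card_sepPart_le_of_subset (hX : X ⊆ X') (x : α) {n : ℕ}
    (hparts : ∀ s ∈ X, #(sepPart I X s) ≤ n) (htop : #(topPart I X) ≤ n) :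
    #(sepPart I X' x) ≤ n := by
  obtain ⟨s, hs, hsub⟩ | hsub := sepPart_subset_sepPart_or_topPart I hX x
  · exact (card_le_card hsub).trans (hparts s hs)
  · exact (card_le_card hsub).trans htop

theorem card_topPart_le_of_subset (hX : X ⊆ X') {n : ℕ} (htop : #(topPart I X) ≤ n) :
    #(topPart I X') ≤ n :=
  (card_le_card (topPart_anti I hX)).trans htop

end Refinement

/-- If `p - 1` separators `S` split `I` into `p` parts of size at most `|I|/p`, and
`p - 1` separators `Tsep` split `T` into `p` parts of size at most `|T|/p`, then the
refinement by `S ∪ Tsep` yields at most `2p - 1` parts, each part of `I` of size at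
most `|I|/p` and each part of `T` of size at most `|T|/p`. -/
theorem double_binary_search_parts (p : ℕ) (hp : 1 ≤ p)
    (I T S Tsep : Finset α)
    (hS : S.card = p - 1) (hTsep : Tsep.card = p - 1)
    (hIparts : ∀ x ∈ S, (sepPart I S x).card ≤ I.card / p)
    (hItop : (topPart I S).card ≤ I.card / p)
    (hTparts : ∀ x ∈ Tsep, (sepPart T Tsep x).card ≤ T.card / p)
    (hTtop : (topPart T Tsep).card ≤ T.card / p) :
    (S ∪ Tsep).card + 1 ≤ 2 * p - 1 ∧
    (∀ x ∈ S ∪ Tsep,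
      (sepPart I (S ∪ Tsep) x).card ≤ I.card / p ∧
      (sepPart T (S ∪ Tsep) x).card ≤ T.card / p) ∧
    (topPart I (S ∪ Tsep)).card ≤ I.card / p ∧
    (topPart T (S ∪ Tsep)).card ≤ T.card / p := by
  have hS_sub : S ⊆ S ∪ Tsep := subset_union_left
  have hTsep_sub : Tsep ⊆ S ∪ Tsep := subset_union_right
  refine ⟨?_, fun x _ => ⟨?_, ?_⟩, ?_, ?_⟩
  · have := card_union_le S Tsep
    omega
  · exact card_sepPart_le_of_subset I hS_sub x hIparts hItop
  · exact card_sepPart_le_of_subset T hTsep_sub x hTparts hTtop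
  · exact card_topPart_le_of_subset I hS_sub hItop
  · exact card_topPart_le_of_subset T hTsep_sub hTtop
end

section
/- Suppose a stack S_U stores pairs (R_i, I_i) whose intervals are pairwise disjoint, sorted, and cover [1, r(U)], and a stack S_V stores pairs whose intervals are pairwise disjoint, sorted, and cover [1, r(V)] with r(V) ≤ r(U). Pop pairs from S_U until the remaining top pair has interval [r_j, r_{j+1} - 1] containing r(V); replace that top pair's interval by [r(V)+1, r_{j+1}-1] (removing it if empty) and push all pairs of S_V on top. Then the resulting stack stores pairwise disjoint, sorted intervals covering [1, r(U)]. -/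
/-!
A stack satisfies the invariants exactly when it is a nonempty tiling of `[1, r + 1)` by
consecutive intervals. Tilings split and concatenate at any point, so the tail of `S_U` below
`(l, h)` tiles `[h + 1, rU + 1)`, and the combined stack is the tiling of `[1, rV + 1)` by `S_V`,
followed by `[rV + 1, h]` (empty when `h = rV`), followed by that tail.
-/

def StackInv (L : List (ℕ × ℕ)) (r : ℕ) : Prop :=
  (∀ q ∈ L, q.1 ≤ q.2) ∧
  List.Chain' (fun q q' => q'.1 = q.2 + 1) L ∧
  (∃ q, L.head? = some q ∧ q.1 = 1) ∧
  (∃ q, L.getLast? = some q ∧ q.2 = r)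

/-- The intervals of `L` tile `[a, b)`. Half-open ranges let the empty list tile `[a, a)`, so
tilings split and concatenate freely. -/
def TilesIco : List (ℕ × ℕ) → ℕ → ℕ → Prop
  | [], a, b => a = b
  | q :: L, a, b => q.1 = a ∧ q.1 ≤ q.2 ∧ TilesIco L (q.2 + 1) b

theorem tilesIco_append {A B : List (ℕ × ℕ)} {a c : ℕ} :
    TilesIco (A ++ B) a c ↔ ∃ b, TilesIco A a b ∧ TilesIco B b c := by
  induction A generalizing a with
  | nil => simp [TilesIco]
  | cons q A ih => simp [TilesIco, ih, and_assoc, exists_and_left]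

theorem tilesIco_cons_iff_start {q : ℕ × ℕ} {L : List (ℕ × ℕ)} {a b : ℕ} :
    TilesIco (q :: L) a b ↔ q.1 = a ∧ TilesIco (q :: L) q.1 b := by
  simp only [TilesIco]
  grind

theorem tilesIco_cons_iff {q : ℕ × ℕ} {L : List (ℕ × ℕ)} {b : ℕ} :
    TilesIco (q :: L) q.1 b ↔
      (∀ p ∈ q :: L, p.1 ≤ p.2) ∧ List.IsChain (fun p p' => p'.1 = p.2 + 1) (q :: L) ∧
        ((q :: L).getLast (List.cons_ne_nil q L)).2 + 1 = b := by
  induction L generalizing q with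
  | nil => simp [TilesIco]
  | cons p L ih =>
    rw [TilesIco, tilesIco_cons_iff_start, ih, List.isChain_cons_cons, List.getLast_cons_cons]
    simp only [List.forall_mem_cons]
    tauto

theorem stackInv_iff_tilesIco {L : List (ℕ × ℕ)} {r : ℕ} :
    StackInv L r ↔ L ≠ [] ∧ TilesIco L 1 (r + 1) := by
  cases L with
  | nil => simp [StackInv]
  | cons q L =>
    simp only [StackInv, List.head?_cons, Option.some.injEq, exists_eq_left',
      List.getLast?_eq_some_getLast (List.cons_ne_nil q L), ne_eq, reduceCtorEq, not_false_eq_true,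
      true_and]
    rw [tilesIco_cons_iff_start, tilesIco_cons_iff, Nat.add_right_cancel_iff]
    tauto

theorem stack_combine_preserves_invariants_general
    (SU SV popped rest : List (ℕ × ℕ)) (l h rU rV : ℕ)
    (hU : StackInv SU rU) (hV : StackInv SV rV)
    (hsplit : SU = popped ++ (l, h) :: rest)
    (hh : rV ≤ h) :
    StackInv (SV ++ (if rV + 1 ≤ h then [(rV + 1, h)] else []) ++ rest) rU := by
  rw [stackInv_iff_tilesIco] at hU hV ⊢
  subst hsplit
  obtain ⟨hVne, hV⟩ := hV
  obtain ⟨_, -, hlh⟩ := tilesIco_append.1 hU.2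
  have hrest : TilesIco rest (h + 1) (rU + 1) := hlh.2.2
  have hmid : TilesIco (if rV + 1 ≤ h then [(rV + 1, h)] else []) (rV + 1) (h + 1) := by
    split_ifs <;> simp [TilesIco] <;> omega
  exact ⟨by simp [hVne], tilesIco_append.2 ⟨h + 1, tilesIco_append.2 ⟨rV + 1, hV, hmid⟩, hrest⟩⟩

/-- Combining the spine stacks: pop pairs from `S_U` until the top interval `[l, h]`
contains `r(V)`, replace it by `[r(V)+1, h]` (dropping it if empty), and push all of
`S_V` on top.  The resulting stack again stores pairwise disjoint, sorted intervals
covering `[1, r(U)]`. -/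
theorem stack_combine_preserves_invariants
    (SU SV popped rest : List (ℕ × ℕ)) (l h rU rV : ℕ)
    (hU : StackInv SU rU) (hV : StackInv SV rV) (hrVU : rV ≤ rU)
    (hsplit : SU = popped ++ (l, h) :: rest)
    (hpopped : ∀ q ∈ popped, q.2 < rV)
    (hl : l ≤ rV) (hh : rV ≤ h) :
    StackInv (SV ++ (if rV + 1 ≤ h then [(rV + 1, h)] else []) ++ rest) rU :=
  stack_combine_preserves_invariants_general SU SV popped rest l h rU rV hU hV hsplit hh
end
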